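/- arXiv:2404.10219 — 6 statements merged into one kernel-verified Lean document; each statement's English description precedes it below -/
import Mathlib

section
/- Let ε > 0, E0 ∈ ℝ, and 0 < θ0 < β < π. Suppose ρ, u, w : (θ0, β) → ℝ are differentiable, with ρ(θ) > 0 and u(θ) ≠ 0 for all θ ∈ (θ0, β), and satisfy the reduced conical-flow ODE system with parameters ε, E0. Then the function θ ↦ p(θ)/ρ(θ)^{ε+1} has vanishing derivative on (θ0, β), i.e. (p/ρ^{ε+1})'(θ) = 0 for all θ ∈ (θ0, β). -/
open Real Set Filter Topology

/-- The reduced conical-flow ODE system with parameters `ε`, `E0`: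
(i) ρu cot θ + (ρu)' + 2ρw = 0; (ii) w' = u; (iii) ρwu + ρuu' + p' = 0,
where p = (ε/(ε+1))·ρ·(E0 − (u² + w²)/2), and `ρ'`, `u'`, `w'` denote the
derivatives of `ρ`, `u`, `w`. -/
def ConicalODE (ε E0 : ℝ) (ρ u w ρ' u' w' : ℝ → ℝ) (θ : ℝ) : Prop :=
  ρ θ * u θ * (Real.cos θ / Real.sin θ) + (ρ' θ * u θ + ρ θ * u' θ) + 2 * ρ θ * w θ = 0 ∧
  w' θ = u θ ∧
  ρ θ * w θ * u θ + ρ θ * u θ * u' θ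
    + (ε / (ε + 1)) * (ρ' θ * (E0 - (u θ ^ 2 + w θ ^ 2) / 2)
        - ρ θ * (u θ * u' θ + w θ * w' θ)) = 0

/-- The pressure p = (ε/(ε+1))·ρ·(E0 − (u² + w²)/2). -/
noncomputable def pres (ε E0 : ℝ) (ρ u w : ℝ → ℝ) (θ : ℝ) : ℝ :=
  (ε / (ε + 1)) * ρ θ * (E0 - (u θ ^ 2 + w θ ^ 2) / 2)

/-- for a differentiable solution of the reduced conical-flow ODE system
with ρ > 0 and u ≠ 0 on (θ0, β), the function θ ↦ p(θ)/ρ(θ)^(ε+1) has vanishing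
derivative on (θ0, β). -/
theorem entropy_invariant (ε E0 θ0 β : ℝ) (hε : 0 < ε) (h0 : 0 < θ0) (h1 : θ0 < β)
    (h2 : β < π) (ρ u w ρ' u' w' : ℝ → ℝ)
    (hρ : ∀ θ ∈ Ioo θ0 β, HasDerivAt ρ (ρ' θ) θ)
    (hu : ∀ θ ∈ Ioo θ0 β, HasDerivAt u (u' θ) θ)
    (hw : ∀ θ ∈ Ioo θ0 β, HasDerivAt w (w' θ) θ)
    (hρpos : ∀ θ ∈ Ioo θ0 β, 0 < ρ θ)
    (hune : ∀ θ ∈ Ioo θ0 β, u θ ≠ 0)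
    (hode : ∀ θ ∈ Ioo θ0 β, ConicalODE ε E0 ρ u w ρ' u' w' θ) :
    ∀ θ ∈ Ioo θ0 β,
      HasDerivAt (fun t => pres ε E0 ρ u w t / ρ t ^ (ε + 1)) 0 θ := by

  intro θ hθ
  obtain ⟨h1', h2', h3'⟩ := hode θ hθ
  have hρθ := hρpos θ hθ
  have hρne : ρ θ ≠ 0 := hρθ.ne'
  have hε1 : ε + 1 ≠ 0 := by positivity
  have hDpos : 0 < ρ θ ^ (ε + 1) := Real.rpow_pos_of_pos hρθ _
  have hq : HasDerivAt (fun t => E0 - (u t ^ 2 + w t ^ 2) / 2)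
      (-(u θ * u' θ + w θ * w' θ)) θ := by
    have h := (((hu θ hθ).pow 2).add ((hw θ hθ).pow 2)).div_const 2
    have h2 := (hasDerivAt_const θ E0).sub h
    refine h2.congr_deriv ?_; ring
  have hp : HasDerivAt (pres ε E0 ρ u w)
      ((ε / (ε + 1)) * (ρ' θ * (E0 - (u θ ^ 2 + w θ ^ 2) / 2)
        - ρ θ * (u θ * u' θ + w θ * w' θ))) θ := by
    have h := (((hρ θ hθ).const_mul (ε / (ε + 1))).mul hq)
    show HasDerivAt (fun t => (ε / (ε + 1)) * ρ t * (E0 - (u t ^ 2 + w t ^ 2) / 2)) _ θ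
    refine h.congr_deriv ?_
    ring
  have hD : HasDerivAt (fun t => ρ t ^ (ε + 1)) ((ε + 1) * ρ θ ^ ε * ρ' θ) θ := by
    have h := (hρ θ hθ).rpow_const (p := ε + 1) (Or.inl hρne)
    rw [show ε + 1 - 1 = ε by ring] at h
    convert h using 1
    ring
  have key : ρ θ * (u θ * u' θ + w θ * w' θ)
      + ε * ρ' θ * (E0 - (u θ ^ 2 + w θ ^ 2) / 2) = 0 := by
    have h3 := h3'
    field_simp at h3
    linear_combination (1/2) * h3 + (ε + 1) * ρ θ * w θ * h2'
  have hF := hp.div hD hDpos.ne'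
  refine hF.congr_deriv (Eq.symm ?_)
  rw [eq_comm, div_eq_zero_iff]
  left
  rw [Real.rpow_add_one hρne]
  simp only [pres]
  linear_combination (-(ε / (ε + 1)) * ρ θ ^ ε * ρ θ) * key
end

section
/- Let ε > 0, E0 ∈ ℝ, and 0 < θ0 < β < π. Suppose ρ, u, w : (θ0, β) → ℝ are differentiable, with ρ(θ) > 0 and u(θ) ≠ 0 for all θ ∈ (θ0, β), and satisfy the reduced conical-flow ODE system with parameters ε, E0. Then for every θ ∈ (θ0, β) one has 2(1+ε)·(p(θ)/ρ(θ)²)·ρ'(θ) + (u² + w²)'(θ) = 0. -/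
open Real Set Filter Topology

/-- for a differentiable solution of the reduced conical-flow ODE system
with ρ > 0 and u ≠ 0 on (θ0, β), one has
2(1+ε)·(p/ρ²)·ρ' + (u² + w²)' = 0 on (θ0, β). -/
theorem density_speed_relation (ε E0 θ0 β : ℝ) (hε : 0 < ε) (h0 : 0 < θ0) (h1 : θ0 < β)
    (h2 : β < π) (ρ u w ρ' u' w' : ℝ → ℝ)
    (hρ : ∀ θ ∈ Ioo θ0 β, HasDerivAt ρ (ρ' θ) θ)
    (hu : ∀ θ ∈ Ioo θ0 β, HasDerivAt u (u' θ) θ)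
    (hw : ∀ θ ∈ Ioo θ0 β, HasDerivAt w (w' θ) θ)
    (hρpos : ∀ θ ∈ Ioo θ0 β, 0 < ρ θ)
    (hune : ∀ θ ∈ Ioo θ0 β, u θ ≠ 0)
    (hode : ∀ θ ∈ Ioo θ0 β, ConicalODE ε E0 ρ u w ρ' u' w' θ) :
    ∀ θ ∈ Ioo θ0 β,
      2 * (1 + ε) * (pres ε E0 ρ u w θ / ρ θ ^ 2) * ρ' θ
        + deriv (fun t => u t ^ 2 + w t ^ 2) θ = 0 := by
  intro θ hθ
  obtain ⟨hA, hB, hC⟩ := hode θ hθ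
  have hρθ : ρ θ ≠ 0 := (hρpos θ hθ).ne'
  have hε1 : ε + 1 ≠ 0 := by positivity
  have hd : HasDerivAt (fun t => u t ^ 2 + w t ^ 2)
      (2 * u θ * u' θ + 2 * w θ * w' θ) θ := by
    have := ((hu θ hθ).fun_pow 2).fun_add ((hw θ hθ).fun_pow 2)
    refine this.congr_deriv ?_
    ring
  rw [hd.deriv, pres]
  rw [hB] at hC ⊢
  field_simp at hC ⊢
  linear_combination (1 + ε) * hC
end

section
/- Let β0 ∈ (0, π/2), E' > 0, E0 = E' + 1/2, and ε ∈ (0, sin²β0/E'); set M² = sin²β0/(εE'). Suppose κ ∈ (0, β0) and ρ, u, w are C¹ on (β0 − κ, β0], satisfy the reduced conical-flow ODE system with parameters ε, E0 there, with ρ > 0, u ≠ 0, M_n ≠ 1 on (β0 − κ, β0], and take the shock boundary values ρ(β0) = (ε+2)M²/(2+εM²), u(β0) = −((2+εM²)/((ε+2)M²))·sin β0, w(β0) = cos β0. Then (u² + w²)'(θ) > 0 for all θ ∈ (β0 − κ, β0]. -/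
open Real Set Filter Topology

/-- The sound speed squared c² = (ε+1)p/ρ = ε(E0 − (u² + w²)/2). -/
noncomputable def soundSq (ε E0 : ℝ) (u w : ℝ → ℝ) (θ : ℝ) : ℝ :=
  ε * (E0 - (u θ ^ 2 + w θ ^ 2) / 2)

/-- The tangential Mach number M_n = |u|/c. -/
noncomputable def Mach (ε E0 : ℝ) (u w : ℝ → ℝ) (θ : ℝ) : ℝ :=
  |u θ| / Real.sqrt (soundSq ε E0 u w θ)

/-- Sign propagation: a continuous nonvanishing function on `Ioc a b` that is
negative at `b` is negative on all of `Ioc a b`. -/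
lemma neg_on_Ioc {a b : ℝ} {f : ℝ → ℝ} (hf : ContinuousOn f (Ioc a b))
    (hne : ∀ x ∈ Ioc a b, f x ≠ 0) (hb : f b < 0) :
    ∀ x ∈ Ioc a b, f x < 0 := by
  intro x hx
  rcases lt_or_ge (f x) 0 with h | h
  · exact h
  · exfalso
    have hsub : Icc x b ⊆ Ioc a b := fun y hy => ⟨lt_of_lt_of_le hx.1 hy.1, hy.2⟩
    have hiv := intermediate_value_Icc' hx.2 (hf.mono hsub)
    obtain ⟨y, hy, hy0⟩ := hiv ⟨le_of_lt hb, h⟩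
    exact hne y (hsub hy) hy0

set_option maxHeartbeats 2000000 in
/-- behind the shock, the squared flow speed |V|² = u² + w² is strictly
increasing in θ: (u² + w²)'(θ) > 0 on (β0 − κ, β0]. -/
theorem speed_increasing (β0 E' E0 ε M κ : ℝ)
    (hβ0 : β0 ∈ Ioo 0 (π / 2)) (hE' : 0 < E') (hE0 : E0 = E' + 1 / 2)
    (hε : ε ∈ Ioo 0 (Real.sin β0 ^ 2 / E'))
    (hM : 0 < M) (hM2 : M ^ 2 = Real.sin β0 ^ 2 / (ε * E'))
    (hκ : κ ∈ Ioo 0 β0)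
    (ρ u w ρ' u' w' : ℝ → ℝ)
    (hρ : ∀ θ ∈ Ioc (β0 - κ) β0, HasDerivWithinAt ρ (ρ' θ) (Ioc (β0 - κ) β0) θ)
    (hu : ∀ θ ∈ Ioc (β0 - κ) β0, HasDerivWithinAt u (u' θ) (Ioc (β0 - κ) β0) θ)
    (hw : ∀ θ ∈ Ioc (β0 - κ) β0, HasDerivWithinAt w (w' θ) (Ioc (β0 - κ) β0) θ)
    (hρ'c : ContinuousOn ρ' (Ioc (β0 - κ) β0)) (hu'c : ContinuousOn u' (Ioc (β0 - κ) β0))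
    (hw'c : ContinuousOn w' (Ioc (β0 - κ) β0))
    (hode : ∀ θ ∈ Ioc (β0 - κ) β0, ConicalODE ε E0 ρ u w ρ' u' w' θ)
    (hρpos : ∀ θ ∈ Ioc (β0 - κ) β0, 0 < ρ θ)
    (hune : ∀ θ ∈ Ioc (β0 - κ) β0, u θ ≠ 0)
    (hMn : ∀ θ ∈ Ioc (β0 - κ) β0, Mach ε E0 u w θ ≠ 1)
    (hρβ : ρ β0 = (ε + 2) * M ^ 2 / (2 + ε * M ^ 2))
    (huβ : u β0 = -((2 + ε * M ^ 2) / ((ε + 2) * M ^ 2)) * Real.sin β0)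
    (hwβ : w β0 = Real.cos β0) :
    ∀ θ ∈ Ioc (β0 - κ) β0, 0 < 2 * u θ * u' θ + 2 * w θ * w' θ := by
  obtain ⟨hβpos, hβlt⟩ := hβ0
  obtain ⟨hεpos, hεlt⟩ := hε
  obtain ⟨hκpos, hκlt⟩ := hκ
  have hπ := Real.pi_pos
  have hβmem : β0 ∈ Ioc (β0 - κ) β0 := ⟨by linarith, le_refl β0⟩
  have hsinpos : ∀ θ ∈ Ioc (β0 - κ) β0, 0 < Real.sin θ := by
    intro θ hθ
    have h1 : 0 < θ := by have := hθ.1; linarith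
    have h2 : θ < π := by have := hθ.2; linarith
    exact Real.sin_pos_of_pos_of_lt_pi h1 h2
  have hs : 0 < Real.sin β0 := hsinpos β0 hβmem
  have hco : 0 < Real.cos β0 := Real.cos_pos_of_mem_Ioo ⟨by linarith, hβlt⟩
  -- ### boundary signs
  have hεE' : ε * E' < Real.sin β0 ^ 2 := (lt_div_iff₀ hE').mp hεlt
  have hεE'pos : 0 < ε * E' := mul_pos hεpos hE'
  have e1M : Real.sin β0 ^ 2 = M ^ 2 * (ε * E') := by rw [hM2]; field_simp
  have hM21 : 1 < M ^ 2 := by nlinarith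
  have hM2pos : 0 < M ^ 2 := by positivity
  obtain ⟨k, hkdef⟩ : ∃ k : ℝ, k = (2 + ε * M ^ 2) / ((ε + 2) * M ^ 2) := ⟨_, rfl⟩
  have hPpos : 0 < (ε + 2) * M ^ 2 := by positivity
  have hk : 0 < k := hkdef ▸ div_pos (by nlinarith) hPpos
  have e2M : k * ((ε + 2) * M ^ 2) = 2 + ε * M ^ 2 := by rw [hkdef]; field_simp
  have hklt : k < 1 := by rw [hkdef, div_lt_one hPpos]; nlinarith
  have huβ' : u β0 = -k * Real.sin β0 := by rw [huβ, ← hkdef]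
  have huβneg : u β0 < 0 := by rw [huβ']; nlinarith
  have hcos2 : Real.cos β0 ^ 2 = 1 - Real.sin β0 ^ 2 := by
    have := Real.sin_sq_add_cos_sq β0; linarith
  have hgβ : u β0 ^ 2 - soundSq ε E0 u w β0 < 0 := by
    have key1 : k ^ 2 * Real.sin β0 ^ 2 * (2 + ε) = k * (2 + ε * M ^ 2) * (ε * E') := by
      linear_combination (ε * E' * k) * e2M + (k ^ 2 * (2 + ε)) * e1M
    have key2 : 2 * ε * E' + ε * Real.sin β0 ^ 2 = (2 + ε * M ^ 2) * (ε * E') := by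
      linear_combination ε * e1M
    have key3 : k ^ 2 * Real.sin β0 ^ 2 * (2 + ε) < 2 * ε * E' + ε * Real.sin β0 ^ 2 := by
      rw [key1, key2]
      nlinarith [mul_pos hεE'pos (show (0:ℝ) < 2 + ε * M ^ 2 by nlinarith)]
    have hεcos : ε * Real.cos β0 ^ 2 = ε * (1 - Real.sin β0 ^ 2) := by rw [hcos2]
    simp only [soundSq]
    rw [huβ', hwβ, hE0]
    nlinarith [key3, hεcos]
  have hhβ : 0 < u β0 * Real.cos β0 + w β0 * Real.sin β0 := by
    rw [huβ', hwβ]; nlinarith [mul_pos hs hco]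
  -- ### continuity
  have cu : ContinuousOn u (Ioc (β0 - κ) β0) := fun θ hθ => (hu θ hθ).continuousWithinAt
  have cw : ContinuousOn w (Ioc (β0 - κ) β0) := fun θ hθ => (hw θ hθ).continuousWithinAt
  have cc2 : ContinuousOn (soundSq ε E0 u w) (Ioc (β0 - κ) β0) := by
    show ContinuousOn (fun θ => ε * (E0 - (u θ ^ 2 + w θ ^ 2) / 2)) _
    exact continuousOn_const.mul
      (continuousOn_const.sub (((cu.pow 2).add (cw.pow 2)).div_const 2))
  have cg : ContinuousOn (fun θ => u θ ^ 2 - soundSq ε E0 u w θ) (Ioc (β0 - κ) β0) :=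
    (cu.pow 2).sub cc2
  have ch : ContinuousOn (fun θ => u θ * Real.cos θ + w θ * Real.sin θ) (Ioc (β0 - κ) β0) :=
    (cu.mul Real.continuous_cos.continuousOn).add (cw.mul Real.continuous_sin.continuousOn)
  -- ### sign propagation for u and u² − c²
  have huneg : ∀ θ ∈ Ioc (β0 - κ) β0, u θ < 0 := neg_on_Ioc cu hune huβneg
  have hgne : ∀ θ ∈ Ioc (β0 - κ) β0, u θ ^ 2 - soundSq ε E0 u w θ ≠ 0 := by
    intro θ hθ h0
    apply hMn θ hθ
    have hc2 : soundSq ε E0 u w θ = u θ ^ 2 := by linarith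
    have hune' : |u θ| ≠ 0 := abs_ne_zero.mpr (hune θ hθ)
    rw [Mach, hc2, Real.sqrt_sq_eq_abs, div_self hune']
  have hgneg : ∀ θ ∈ Ioc (β0 - κ) β0, u θ ^ 2 - soundSq ε E0 u w θ < 0 :=
    neg_on_Ioc cg hgne hgβ
  have hc2pos : ∀ θ ∈ Ioc (β0 - κ) β0, 0 < soundSq ε E0 u w θ := by
    intro θ hθ
    nlinarith [hgneg θ hθ, sq_nonneg (u θ)]
  -- ### the key pointwise identity
  have key : ∀ θ ∈ Ioc (β0 - κ) β0,
      (u θ ^ 2 - soundSq ε E0 u w θ) * ((u' θ + w θ) * Real.sin θ)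
        = soundSq ε E0 u w θ * (u θ * Real.cos θ + w θ * Real.sin θ) := by
    intro θ hθ
    obtain ⟨e1, e2, e3⟩ := hode θ hθ
    have hsθ : Real.sin θ ≠ 0 := ne_of_gt (hsinpos θ hθ)
    have hρθ : ρ θ ≠ 0 := ne_of_gt (hρpos θ hθ)
    have hε1 : (ε : ℝ) + 1 ≠ 0 := by linarith
    rw [e2] at e3
    have e1s : (ρ θ * u θ * (Real.cos θ / Real.sin θ)) * Real.sin θ
        = ρ θ * u θ * Real.cos θ := by field_simp
    have e1' : ρ θ * u θ * Real.cos θ + (ρ' θ * u θ + ρ θ * u' θ) * Real.sin θ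
        + 2 * ρ θ * w θ * Real.sin θ = 0 := by
      linear_combination Real.sin θ * e1 - e1s
    have epsq : ε / (ε + 1) * (ε + 1) = ε := by field_simp
    have e3' : ρ θ * u θ * (u' θ + w θ)
        + ε * (ρ' θ * (E0 - (u θ ^ 2 + w θ ^ 2) / 2)) = 0 := by
      linear_combination (ε + 1) * e3
        - (ρ' θ * (E0 - (u θ ^ 2 + w θ ^ 2) / 2)
            - ρ θ * (u θ * u' θ + w θ * u θ)) * epsq
    have main : ρ θ * ((u θ ^ 2 - ε * (E0 - (u θ ^ 2 + w θ ^ 2) / 2))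
          * ((u' θ + w θ) * Real.sin θ)
        - ε * (E0 - (u θ ^ 2 + w θ ^ 2) / 2)
          * (u θ * Real.cos θ + w θ * Real.sin θ)) = 0 := by
      linear_combination (u θ * Real.sin θ) * e3'
        - (ε * (E0 - (u θ ^ 2 + w θ ^ 2) / 2)) * e1'
    have hz := (mul_eq_zero.mp main).resolve_left hρθ
    simp only [soundSq]
    linarith
  -- ### nonvanishing of h = u cos + w sin  (Grönwall)
  have hhne : ∀ θ0 ∈ Ioc (β0 - κ) β0, u θ0 * Real.cos θ0 + w θ0 * Real.sin θ0 ≠ 0 := by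
    intro θ0 hθ0 h0
    have hsub : Icc θ0 β0 ⊆ Ioc (β0 - κ) β0 := fun y hy => ⟨lt_of_lt_of_le hθ0.1 hy.1, hy.2⟩
    have hcf : ContinuousOn (fun θ => soundSq ε E0 u w θ * Real.cos θ
        / ((u θ ^ 2 - soundSq ε E0 u w θ) * Real.sin θ)) (Icc θ0 β0) := by
      apply ContinuousOn.div
      · exact (cc2.mono hsub).mul Real.continuous_cos.continuousOn
      · exact ((cg.mono hsub)).mul Real.continuous_sin.continuousOn
      · intro x hx
        exact ne_of_lt (mul_neg_of_neg_of_pos (hgneg x (hsub hx)) (hsinpos x (hsub hx)))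
    obtain ⟨K, hK⟩ := isCompact_Icc.exists_bound_of_continuousOn hcf
    have hbound : ∀ x ∈ Ico θ0 β0, ‖(u' x + w x) * Real.cos x‖
        ≤ K * ‖u x * Real.cos x + w x * Real.sin x‖ + 0 := by
      intro x hx
      have hxS : x ∈ Ioc (β0 - κ) β0 := hsub (Ico_subset_Icc_self hx)
      have hden : (u x ^ 2 - soundSq ε E0 u w x) * Real.sin x ≠ 0 :=
        ne_of_lt (mul_neg_of_neg_of_pos (hgneg x hxS) (hsinpos x hxS))
      have heq : (u' x + w x) * Real.cos x
          = (soundSq ε E0 u w x * Real.cos x / ((u x ^ 2 - soundSq ε E0 u w x) * Real.sin x))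
            * (u x * Real.cos x + w x * Real.sin x) := by
        rw [div_mul_eq_mul_div, eq_div_iff hden]
        linear_combination Real.cos x * key x hxS
      rw [heq, norm_mul, add_zero]
      exact mul_le_mul_of_nonneg_right (hK x (Ico_subset_Icc_self hx)) (norm_nonneg _)
    have hderiv : ∀ x ∈ Ico θ0 β0,
        HasDerivWithinAt (fun θ => u θ * Real.cos θ + w θ * Real.sin θ)
          ((u' x + w x) * Real.cos x) (Ici x) x := by
      intro x hx
      have hxS : x ∈ Ioc (β0 - κ) β0 := hsub (Ico_subset_Icc_self hx)
      have h1 := (hu x hxS).mul ((Real.hasDerivAt_cos x).hasDerivWithinAt)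
      have h2 := (hw x hxS).mul ((Real.hasDerivAt_sin x).hasDerivWithinAt)
      have h3 := h1.add h2
      have hderS : HasDerivWithinAt (fun θ => u θ * Real.cos θ + w θ * Real.sin θ)
          ((u' x + w x) * Real.cos x) (Ioc (β0 - κ) β0) x := by
        have h4 : (u' x + w x) * Real.cos x
            = u' x * Real.cos x + u x * -Real.sin x + (w' x * Real.sin x + w x * Real.cos x) := by
          rw [(hode x hxS).2.1]; ring
        rw [h4]; exact h3
      have hmem : Icc x β0 ∈ 𝓝[Ici x] x := by
        rw [← Ici_inter_Iic]
        exact inter_mem self_mem_nhdsWithin (mem_nhdsWithin_of_mem_nhds (Iic_mem_nhds hx.2))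
      exact ((hderS.mono (fun y hy => ⟨lt_of_lt_of_le hxS.1 hy.1, hy.2⟩))).mono_of_mem_nhdsWithin hmem
    have ha0 : ‖u θ0 * Real.cos θ0 + w θ0 * Real.sin θ0‖ ≤ (0:ℝ) := by rw [h0]; simp
    have hg := norm_le_gronwallBound_of_norm_deriv_right_le (ch.mono hsub) hderiv ha0 hbound
    have hβ' := hg β0 (right_mem_Icc.mpr hθ0.2)
    rw [gronwallBound_ε0_δ0] at hβ'
    have hzero : u β0 * Real.cos β0 + w β0 * Real.sin β0 = 0 := norm_le_zero_iff.mp hβ'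
    linarith
  have hhpos : ∀ θ ∈ Ioc (β0 - κ) β0, 0 < u θ * Real.cos θ + w θ * Real.sin θ := by
    have hneg := neg_on_Ioc (f := fun θ => -(u θ * Real.cos θ + w θ * Real.sin θ)) ch.neg
      (fun x hx => neg_ne_zero.mpr (hhne x hx))
      (by show -(u β0 * Real.cos β0 + w β0 * Real.sin β0) < 0; linarith)
    intro θ hθ
    have h : -(u θ * Real.cos θ + w θ * Real.sin θ) < 0 := hneg θ hθ
    linarith
  -- ### conclusion
  intro θ hθ
  have e2 := (hode θ hθ).2.1
  have hk' := key θ hθ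
  have hden : (u θ ^ 2 - soundSq ε E0 u w θ) * Real.sin θ < 0 :=
    mul_neg_of_neg_of_pos (hgneg θ hθ) (hsinpos θ hθ)
  have hnum : 0 < soundSq ε E0 u w θ * (u θ * Real.cos θ + w θ * Real.sin θ) :=
    mul_pos (hc2pos θ hθ) (hhpos θ hθ)
  have hA : u' θ + w θ < 0 := by
    by_contra hA
    push_neg at hA
    have h1 : ((u θ ^ 2 - soundSq ε E0 u w θ) * Real.sin θ) * (u' θ + w θ) ≤ 0 :=
      mul_nonpos_of_nonpos_of_nonneg (le_of_lt hden) hA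
    nlinarith [hk']
  have := mul_pos_of_neg_of_neg (huneg θ hθ) hA
  rw [e2]
  nlinarith [this]
end

section
/- Let β0 ∈ (0, π/2), E' > 0, E0 = E' + 1/2, and ε ∈ (0, sin²β0/E'); set M² = sin²β0/(εE'). Suppose κ ∈ (0, β0) and ρ, u, w are C¹ on (β0 − κ, β0], satisfy the reduced conical-flow ODE system with parameters ε, E0 there, with ρ > 0, u ≠ 0, M_n ≠ 1 on (β0 − κ, β0], and take the shock boundary values ρ(β0) = (ε+2)M²/(2+εM²), u(β0) = −((2+εM²)/((ε+2)M²))·sin β0, w(β0) = cos β0. Then ρ'(θ) < 0 for all θ ∈ (β0 − κ, β0]; in particular ρ is strictly monotonically decreasing on (β0 − κ, β0]. -/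
open Real Set Filter Topology

set_option maxHeartbeats 1000000

/-- behind the shock, the density is strictly decreasing:
ρ'(θ) < 0 on (β0 − κ, β0], and ρ is strictly monotonically decreasing there. -/
theorem density_decreasing (β0 E' E0 ε M κ : ℝ)
    (hβ0 : β0 ∈ Ioo 0 (π / 2)) (hE' : 0 < E') (hE0 : E0 = E' + 1 / 2)
    (hε : ε ∈ Ioo 0 (Real.sin β0 ^ 2 / E'))
    (hM : 0 < M) (hM2 : M ^ 2 = Real.sin β0 ^ 2 / (ε * E'))
    (hκ : κ ∈ Ioo 0 β0)
    (ρ u w ρ' u' w' : ℝ → ℝ)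
    (hρ : ∀ θ ∈ Ioc (β0 - κ) β0, HasDerivWithinAt ρ (ρ' θ) (Ioc (β0 - κ) β0) θ)
    (hu : ∀ θ ∈ Ioc (β0 - κ) β0, HasDerivWithinAt u (u' θ) (Ioc (β0 - κ) β0) θ)
    (hw : ∀ θ ∈ Ioc (β0 - κ) β0, HasDerivWithinAt w (w' θ) (Ioc (β0 - κ) β0) θ)
    (hρ'c : ContinuousOn ρ' (Ioc (β0 - κ) β0)) (hu'c : ContinuousOn u' (Ioc (β0 - κ) β0))
    (hw'c : ContinuousOn w' (Ioc (β0 - κ) β0))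
    (hode : ∀ θ ∈ Ioc (β0 - κ) β0, ConicalODE ε E0 ρ u w ρ' u' w' θ)
    (hρpos : ∀ θ ∈ Ioc (β0 - κ) β0, 0 < ρ θ)
    (hune : ∀ θ ∈ Ioc (β0 - κ) β0, u θ ≠ 0)
    (hMn : ∀ θ ∈ Ioc (β0 - κ) β0, Mach ε E0 u w θ ≠ 1)
    (hρβ : ρ β0 = (ε + 2) * M ^ 2 / (2 + ε * M ^ 2))
    (huβ : u β0 = -((2 + ε * M ^ 2) / ((ε + 2) * M ^ 2)) * Real.sin β0)
    (hwβ : w β0 = Real.cos β0) :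
    (∀ θ ∈ Ioc (β0 - κ) β0, ρ' θ < 0) ∧ StrictAntiOn ρ (Ioc (β0 - κ) β0) := by
  obtain ⟨hβ0l, hβ0r⟩ := hβ0
  obtain ⟨hεl, hεr⟩ := hε
  obtain ⟨hκl, hκr⟩ := hκ
  have hπ := Real.pi_pos
  set I : Set ℝ := Ioc (β0 - κ) β0 with hIdef
  have hsβ : 0 < Real.sin β0 := Real.sin_pos_of_pos_of_lt_pi hβ0l (by linarith)
  have hcβ : 0 < Real.cos β0 := Real.cos_pos_of_mem_Ioo ⟨by linarith, hβ0r⟩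
  have hεE : 0 < ε * E' := mul_pos hεl hE'
  have hsE : ε * E' < Real.sin β0 ^ 2 := by
    have := (lt_div_iff₀ hE').1 hεr; linarith
  have hM2gt : 1 < M ^ 2 := by
    rw [hM2]; exact (one_lt_div hεE).2 hsE
  have hM2pos : (0:ℝ) < M ^ 2 := by positivity
  have hsin : ∀ θ ∈ I, 0 < Real.sin θ := fun θ hθ =>
    Real.sin_pos_of_pos_of_lt_pi (by linarith [hθ.1]) (by linarith [hθ.2])
  have hcos : ∀ θ ∈ I, 0 < Real.cos θ := fun θ hθ =>
    Real.cos_pos_of_mem_Ioo ⟨by linarith [hθ.1], by linarith [hθ.2]⟩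
  have hβI : β0 ∈ I := ⟨by linarith, le_refl β0⟩
  have hρc : ContinuousOn ρ I := fun θ hθ => (hρ θ hθ).continuousWithinAt
  have huc : ContinuousOn u I := fun θ hθ => (hu θ hθ).continuousWithinAt
  have hwc : ContinuousOn w I := fun θ hθ => (hw θ hθ).continuousWithinAt
  set c2 : ℝ → ℝ := fun θ => ε * (E0 - (u θ ^ 2 + w θ ^ 2) / 2) with hc2
  have hc2c : ContinuousOn c2 I :=
    continuousOn_const.mul (continuousOn_const.sub
      (((huc.pow 2).add (hwc.pow 2)).div_const 2))
  set D : ℝ → ℝ := fun θ => c2 θ - u θ ^ 2 with hD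
  have hDc : ContinuousOn D I := hc2c.sub (huc.pow 2)
  set F : ℝ → ℝ := fun θ => w θ * Real.sin θ + u θ * Real.cos θ with hF
  have hFc : ContinuousOn F I :=
    (hwc.mul Real.continuous_sin.continuousOn).add (huc.mul Real.continuous_cos.continuousOn)
  -- u is negative on I
  have huβ0 : u β0 < 0 := by
    rw [huβ]
    have h1 : 0 < (2 + ε * M ^ 2) / ((ε + 2) * M ^ 2) := by positivity
    nlinarith
  have huneg : ∀ θ ∈ I, u θ < 0 := by
    intro θ hθ
    rcases lt_or_gt_of_ne (hune θ hθ) with h | h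
    · exact h
    exfalso
    have hsub : Icc θ β0 ⊆ I := fun x hx => ⟨lt_of_lt_of_le hθ.1 hx.1, hx.2⟩
    have h0 : (0:ℝ) ∈ Icc (u β0) (u θ) := ⟨huβ0.le, h.le⟩
    obtain ⟨x, hx, hx0⟩ := intermediate_value_Icc' hθ.2 (huc.mono hsub) h0
    exact hune x (hsub hx) hx0
  -- auxiliary boundary facts
  have hs2 : Real.sin β0 ^ 2 = ε * E' * M ^ 2 := by
    rw [hM2]; field_simp
  have hcs : Real.cos β0 ^ 2 = 1 - Real.sin β0 ^ 2 := Real.cos_sq' β0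
  have huβ2 : u β0 ^ 2 = ε * E' * (2 + ε * M ^ 2) ^ 2 / ((ε + 2) ^ 2 * M ^ 2) := by
    rw [huβ, mul_pow, neg_pow, hs2]
    field_simp
  -- D is positive at β0
  have hDβ : 0 < D β0 := by
    have hgoal : D β0 = ε * E' * (M ^ 2 - 1) * (2 + ε * M ^ 2) / ((ε + 2) * M ^ 2) := by
      simp only [hD, hc2]
      rw [hwβ, hE0, huβ2, hcs, hs2]
      field_simp
      ring
    rw [hgoal]
    apply div_pos
    · nlinarith
    · positivity
  -- D is positive on I (via the Mach number hypothesis)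
  have hDpos : ∀ θ ∈ I, 0 < D θ := by
    intro θ hθ
    by_contra h
    push_neg at h
    have hsub : Icc θ β0 ⊆ I := fun x hx => ⟨lt_of_lt_of_le hθ.1 hx.1, hx.2⟩
    have h0 : (0:ℝ) ∈ Icc (D θ) (D β0) := ⟨h, hDβ.le⟩
    obtain ⟨x, hx, hx0⟩ := intermediate_value_Icc hθ.2 (hDc.mono hsub) h0
    have hxI : x ∈ I := hsub hx
    apply hMn x hxI
    have hsq : soundSq ε E0 u w x = u x ^ 2 := by
      have hx0' : c2 x - u x ^ 2 = 0 := hx0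
      simp only [soundSq, hc2] at *
      linarith
    rw [Mach, hsq, Real.sqrt_sq_eq_abs, div_self (abs_ne_zero.2 (hune x hxI))]
  -- key algebraic identities
  have hε1 : ε + 1 ≠ 0 := by positivity
  have keyA : ∀ θ ∈ I, ρ' θ * c2 θ = -(ρ θ * u θ * (w θ + u' θ)) := by
    intro θ hθ
    obtain ⟨e1, e2, e3⟩ := hode θ hθ
    rw [e2] at e3
    field_simp at e3
    simp only [hc2]
    linear_combination e3 / 2
  have keyB : ∀ θ ∈ I, ρ' θ * (D θ * Real.sin θ) = ρ θ * u θ * F θ := by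
    intro θ hθ
    obtain ⟨e1, e2, e3⟩ := hode θ hθ
    have hsθ : Real.sin θ ≠ 0 := (hsin θ hθ).ne'
    field_simp at e1
    have hA := keyA θ hθ
    simp only [hD, hF]
    linear_combination Real.sin θ * hA - u θ * e1
  have keyC : ∀ θ ∈ I, (w θ + u' θ) * (Real.sin θ * D θ) = -(c2 θ * F θ) := by
    intro θ hθ
    have hne : ρ θ * u θ ≠ 0 := mul_ne_zero (hρpos θ hθ).ne' (hune θ hθ)
    apply mul_left_cancel₀ hne
    linear_combination Real.sin θ * D θ * keyA θ hθ - c2 θ * keyB θ hθ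
  -- F is positive at β0
  have hFβ : 0 < F β0 := by
    simp only [hF]
    rw [hwβ, huβ]
    have h1 : (2 + ε * M ^ 2) < (ε + 2) * M ^ 2 := by nlinarith
    have h2 : (0:ℝ) < (ε + 2) * M ^ 2 := by positivity
    have hLlt : (2 + ε * M ^ 2) / ((ε + 2) * M ^ 2) < 1 := (div_lt_one h2).2 h1
    have h3 : Real.cos β0 * Real.sin β0 +
        -((2 + ε * M ^ 2) / ((ε + 2) * M ^ 2)) * Real.sin β0 * Real.cos β0 =
        Real.cos β0 * Real.sin β0 * (1 - (2 + ε * M ^ 2) / ((ε + 2) * M ^ 2)) := by ring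
    rw [h3]
    exact mul_pos (mul_pos hcβ hsβ) (sub_pos.2 hLlt)
  -- derivative of F
  set Fd : ℝ → ℝ := fun x => Real.cos x * (w x + u' x) with hFddef
  have hFd : ∀ x ∈ I, HasDerivWithinAt F (Fd x) I x := by
    intro x hx
    have h1 := ((hw x hx).mul (Real.hasDerivAt_sin x).hasDerivWithinAt).add
      ((hu x hx).mul (Real.hasDerivAt_cos x).hasDerivWithinAt)
    have e2 := (hode x hx).2.1
    have h3 : Fd x = w' x * Real.sin x + w x * Real.cos x + (u' x * Real.cos x + u x * -Real.sin x) := by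
      simp only [hFddef]; rw [e2]; ring
    rw [h3]; exact h1
  -- F is positive on I, by a Grönwall argument
  have hFpos : ∀ θ ∈ I, 0 < F θ := by
    by_contra h
    push_neg at h
    obtain ⟨θ1, hθ1, hθ1F⟩ := h
    set S : Set ℝ := {x ∈ Icc θ1 β0 | F x ≤ 0} with hSdef
    have hIccsub : Icc θ1 β0 ⊆ I := fun x hx => ⟨lt_of_lt_of_le hθ1.1 hx.1, hx.2⟩
    have hSne : S.Nonempty := ⟨θ1, ⟨le_refl _, hθ1.2⟩, hθ1F⟩
    have hSbdd : BddAbove S := BddAbove.mono (fun x hx => hx.1) bddAbove_Icc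
    have hSclosed : IsClosed S :=
      (hFc.mono hIccsub).preimage_isClosed_of_isClosed isClosed_Icc isClosed_Iic
    set t := sSup S with htdef
    have htS : t ∈ S := hSclosed.csSup_mem hSne hSbdd
    have htI : t ∈ I := hIccsub htS.1
    have htlt : t < β0 := by
      rcases lt_or_eq_of_le htI.2 with h' | h'
      · exact h'
      · exfalso; rw [h'] at htS; linarith [htS.2, hFβ]
    have hIccsub' : Icc t β0 ⊆ I := fun x hx => ⟨lt_of_lt_of_le htI.1 hx.1, hx.2⟩
    have hpos' : ∀ x ∈ Ioc t β0, 0 < F x := by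
      intro x hx
      by_contra hx0
      push_neg at hx0
      have hxS : x ∈ S := ⟨⟨le_trans htS.1.1 hx.1.le, hx.2⟩, hx0⟩
      exact absurd (le_csSup hSbdd hxS) (not_le.2 hx.1)
    have hFt0 : F t = 0 := by
      refine le_antisymm htS.2 ?_
      have hIoc : Ioc t β0 ∈ 𝓝[>] t := Ioc_mem_nhdsGT htlt
      have hImem : I ∈ 𝓝[>] t := mem_of_superset hIoc (fun x hx => ⟨lt_of_lt_of_le htI.1 hx.1.le, hx.2⟩)
      have htend : Tendsto F (𝓝[>] t) (𝓝 (F t)) :=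
        (hFc t htI).tendsto.mono_left (nhdsWithin_le_of_mem hImem)
      exact ge_of_tendsto htend (Filter.eventually_of_mem hIoc fun x hx => (hpos' x hx).le)
    -- the bound function
    set g : ℝ → ℝ := fun x => Real.cos x * c2 x / (Real.sin x * D x) with hgdef
    have hgc : ContinuousOn g (Icc t β0) := by
      apply ContinuousOn.div
      · exact (Real.continuous_cos.continuousOn.mul hc2c).mono hIccsub'
      · exact (Real.continuous_sin.continuousOn.mul hDc).mono hIccsub'
      · intro x hx
        exact (mul_pos (hsin x (hIccsub' hx)) (hDpos x (hIccsub' hx))).ne'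
    obtain ⟨x0, hx0mem, hx0max⟩ :=
      isCompact_Icc.exists_isMaxOn (nonempty_Icc.2 htlt.le) hgc.abs
    set K := |g x0| with hKdef
    have hbound : ∀ x ∈ Ico t β0, ‖Fd x‖ ≤ K * ‖F x‖ + 0 := by
      intro x hx
      have hxI : x ∈ I := ⟨lt_of_lt_of_le htI.1 hx.1, hx.2.le⟩
      have hden : Real.sin x * D x ≠ 0 := (mul_pos (hsin x hxI) (hDpos x hxI)).ne'
      have hformula : Fd x = -(g x * F x) := by
        have hC := keyC x hxI
        simp only [hFddef, hgdef]
        rw [div_mul_eq_mul_div, ← neg_div, eq_div_iff hden]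
        linear_combination Real.cos x * hC
      rw [hformula, add_zero, norm_neg, norm_mul]
      have : ‖g x‖ ≤ K := hx0max ⟨hx.1, hx.2.le⟩
      exact mul_le_mul_of_nonneg_right this (norm_nonneg _)
    have hcont : ContinuousOn F (Icc t β0) := hFc.mono hIccsub'
    have hderiv : ∀ x ∈ Ico t β0, HasDerivWithinAt F (Fd x) (Ici x) x := by
      intro x hx
      have hxI : x ∈ I := ⟨lt_of_lt_of_le htI.1 hx.1, hx.2.le⟩
      refine (hFd x hxI).mono_of_mem_nhdsWithin ?_
      have h1 : Iio β0 ∈ 𝓝[Ici x] x := mem_nhdsWithin_of_mem_nhds (Iio_mem_nhds hx.2)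
      refine mem_of_superset (inter_mem self_mem_nhdsWithin h1) ?_
      rintro y ⟨hy1, hy2⟩
      exact ⟨lt_of_lt_of_le hxI.1 hy1, le_of_lt hy2⟩
    have ha0 : ‖F t‖ ≤ 0 := by rw [hFt0]; simp
    have hgr := norm_le_gronwallBound_of_norm_deriv_right_le hcont hderiv ha0 hbound β0
      ⟨htlt.le, le_refl _⟩
    rw [gronwallBound_ε0_δ0, Real.norm_eq_abs] at hgr
    linarith [le_abs_self (F β0), hFβ, hgr]
  -- conclusion
  have main : ∀ θ ∈ I, ρ' θ < 0 := by
    intro θ hθ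
    have hB := keyB θ hθ
    have h1 : 0 < D θ * Real.sin θ := mul_pos (hDpos θ hθ) (hsin θ hθ)
    have h2 : ρ θ * u θ * F θ < 0 :=
      mul_neg_of_neg_of_pos (mul_neg_of_pos_of_neg (hρpos θ hθ) (huneg θ hθ)) (hFpos θ hθ)
    nlinarith
  refine ⟨main, ?_⟩
  apply strictAntiOn_of_deriv_neg (convex_Ioc (β0 - κ) β0) hρc
  intro x hx
  rw [interior_Ioc] at hx
  have hxI : x ∈ I := Ioo_subset_Ioc_self hx
  have hder : HasDerivAt ρ (ρ' x) x := (hρ x hxI).hasDerivAt (Ioc_mem_nhds hx.1 hx.2)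
  rw [hder.deriv]
  exact main x hxI
end

section
/- Let β0 ∈ (0, π/2), E' > 0, E0 = E' + 1/2, and ε ∈ (0, sin²β0/E'); set M² = sin²β0/(εE'). Suppose κ ∈ (0, β0) and ρ, u, w are C¹ on (β0 − κ, β0], satisfy the reduced conical-flow ODE system with parameters ε, E0 there, with ρ > 0, u ≠ 0, M_n ≠ 1 on (β0 − κ, β0], and take the shock boundary values ρ(β0) = (ε+2)M²/(2+εM²), u(β0) = −((2+εM²)/((ε+2)M²))·sin β0, w(β0) = cos β0. Then on (β0 − κ, β0]: u(θ) < 0, w(θ) > 0, w'(θ) < 0, c'(θ) < 0, u'(θ) < 0, M_n'(θ) > 0, and 0 < M_n(θ) < 1. In particular w, c and u are strictly decreasing and M_n is strictly increasing on (β0 − κ, β0]. -/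
open Real Set Filter Topology

/-- A continuous function on `Ioc a b` which is positive at `b` and never vanishes
is positive everywhere on `Ioc a b`. -/
lemma aux_pos_Ioc {a b : ℝ} {f : ℝ → ℝ} (hf : ContinuousOn f (Ioc a b))
    (hfb : 0 < f b) (hne : ∀ x ∈ Ioc a b, f x ≠ 0) :
    ∀ x ∈ Ioc a b, 0 < f x := by
  intro x hx
  rcases lt_or_ge 0 (f x) with h | h
  · exact h
  exfalso
  have hsub : Icc x b ⊆ Ioc a b := fun y hy => ⟨lt_of_lt_of_le hx.1 hy.1, hy.2⟩
  obtain ⟨y, hy, hfy⟩ := intermediate_value_Icc hx.2 (hf.mono hsub) ⟨h, hfb.le⟩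
  exact hne y (hsub hy) hfy

set_option maxHeartbeats 2000000 in
/-- behind the shock, on (β0 − κ, β0] one has u < 0, w > 0, w' < 0,
c' < 0, u' < 0, M_n' > 0, and 0 < M_n < 1; in particular w, c, u are strictly
decreasing and M_n is strictly increasing on (β0 − κ, β0]. (Here c = √(soundSq) and
derivatives of c and M_n are one-sided, i.e. within (β0 − κ, β0].) -/
theorem monotonicity_behind_shock (β0 E' E0 ε M κ : ℝ)
    (hβ0 : β0 ∈ Ioo 0 (π / 2)) (hE' : 0 < E') (hE0 : E0 = E' + 1 / 2)
    (hε : ε ∈ Ioo 0 (Real.sin β0 ^ 2 / E'))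
    (hM : 0 < M) (hM2 : M ^ 2 = Real.sin β0 ^ 2 / (ε * E'))
    (hκ : κ ∈ Ioo 0 β0)
    (ρ u w ρ' u' w' : ℝ → ℝ)
    (hρ : ∀ θ ∈ Ioc (β0 - κ) β0, HasDerivWithinAt ρ (ρ' θ) (Ioc (β0 - κ) β0) θ)
    (hu : ∀ θ ∈ Ioc (β0 - κ) β0, HasDerivWithinAt u (u' θ) (Ioc (β0 - κ) β0) θ)
    (hw : ∀ θ ∈ Ioc (β0 - κ) β0, HasDerivWithinAt w (w' θ) (Ioc (β0 - κ) β0) θ)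
    (hρ'c : ContinuousOn ρ' (Ioc (β0 - κ) β0)) (hu'c : ContinuousOn u' (Ioc (β0 - κ) β0))
    (hw'c : ContinuousOn w' (Ioc (β0 - κ) β0))
    (hode : ∀ θ ∈ Ioc (β0 - κ) β0, ConicalODE ε E0 ρ u w ρ' u' w' θ)
    (hρpos : ∀ θ ∈ Ioc (β0 - κ) β0, 0 < ρ θ)
    (hune : ∀ θ ∈ Ioc (β0 - κ) β0, u θ ≠ 0)
    (hMn : ∀ θ ∈ Ioc (β0 - κ) β0, Mach ε E0 u w θ ≠ 1)
    (hρβ : ρ β0 = (ε + 2) * M ^ 2 / (2 + ε * M ^ 2))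
    (huβ : u β0 = -((2 + ε * M ^ 2) / ((ε + 2) * M ^ 2)) * Real.sin β0)
    (hwβ : w β0 = Real.cos β0) :
    (∀ θ ∈ Ioc (β0 - κ) β0, u θ < 0) ∧
    (∀ θ ∈ Ioc (β0 - κ) β0, 0 < w θ) ∧
    (∀ θ ∈ Ioc (β0 - κ) β0, w' θ < 0) ∧
    (∀ θ ∈ Ioc (β0 - κ) β0,
      derivWithin (fun t => Real.sqrt (soundSq ε E0 u w t)) (Ioc (β0 - κ) β0) θ < 0) ∧
    (∀ θ ∈ Ioc (β0 - κ) β0, u' θ < 0) ∧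
    (∀ θ ∈ Ioc (β0 - κ) β0, 0 < derivWithin (Mach ε E0 u w) (Ioc (β0 - κ) β0) θ) ∧
    (∀ θ ∈ Ioc (β0 - κ) β0, 0 < Mach ε E0 u w θ ∧ Mach ε E0 u w θ < 1) ∧
    StrictAntiOn w (Ioc (β0 - κ) β0) ∧
    StrictAntiOn (fun t => Real.sqrt (soundSq ε E0 u w t)) (Ioc (β0 - κ) β0) ∧
    StrictAntiOn u (Ioc (β0 - κ) β0) ∧
    StrictMonoOn (Mach ε E0 u w) (Ioc (β0 - κ) β0) := by
  obtain ⟨hb0, hbπ⟩ := hβ0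
  obtain ⟨hε0, hεlt⟩ := hε
  obtain ⟨hκ0, hκβ⟩ := hκ
  set S := Ioc (β0 - κ) β0 with hSdef
  have hab : β0 - κ < β0 := by linarith
  have hbS : β0 ∈ S := ⟨hab, le_refl β0⟩
  have hπ := Real.pi_pos
  have hsβ : 0 < Real.sin β0 := Real.sin_pos_of_pos_of_lt_pi hb0 (by linarith)
  have hcβ : 0 < Real.cos β0 := Real.cos_pos_of_mem_Ioo ⟨by linarith, hbπ⟩
  have hsθ : ∀ θ ∈ S, 0 < Real.sin θ := fun θ hθ =>
    Real.sin_pos_of_pos_of_lt_pi (by have := hθ.1; linarith) (by have := hθ.2; linarith)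
  have hcθ : ∀ θ ∈ S, 0 < Real.cos θ := fun θ hθ =>
    Real.cos_pos_of_mem_Ioo ⟨by have := hθ.1; linarith, lt_of_le_of_lt hθ.2 hbπ⟩
  have hM1 : 1 < M ^ 2 := by
    rw [hM2, lt_div_iff₀ (by positivity)]
    have := (lt_div_iff₀ hE').mp hεlt
    linarith
  -- continuity
  have huc : ContinuousOn u S := fun θ hθ => (hu θ hθ).continuousWithinAt
  have hwc : ContinuousOn w S := fun θ hθ => (hw θ hθ).continuousWithinAt
  have hccfun : soundSq ε E0 u w = fun t => ε * (E0 - (u t ^ 2 + w t ^ 2) / 2) := rfl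
  have hccc : ContinuousOn (soundSq ε E0 u w) S := by
    rw [hccfun]
    exact continuousOn_const.mul
      (continuousOn_const.sub (((huc.pow 2).add (hwc.pow 2)).div_const 2))
  -- ODE consequences
  have hODE2 : ∀ θ ∈ S, w' θ = u θ := fun θ hθ => (hode θ hθ).2.1
  have h2 : ∀ θ ∈ S, ρ θ * u θ * (u' θ + w θ) + ρ' θ * soundSq ε E0 u w θ = 0 := by
    intro θ hθ
    obtain ⟨e1, e2, e3⟩ := hode θ hθ
    rw [e2] at e3
    have hne1 : ε + 1 ≠ 0 := by positivity
    simp only [soundSq]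
    field_simp at e3
    linear_combination e3 / 2
  have h4 : ∀ θ ∈ S, (u' θ + w θ) * (soundSq ε E0 u w θ - u θ ^ 2) * Real.sin θ
      + (u θ * Real.cos θ + w θ * Real.sin θ) * soundSq ε E0 u w θ = 0 := by
    intro θ hθ
    obtain ⟨e1, e2, e3⟩ := hode θ hθ
    have hs := (hsθ θ hθ).ne'
    have hd : Real.cos θ / Real.sin θ * Real.sin θ = Real.cos θ := div_mul_cancel₀ _ hs
    have e1'' : ρ θ * u θ * Real.cos θ + (ρ' θ * u θ + ρ θ * u' θ) * Real.sin θ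
        + 2 * ρ θ * w θ * Real.sin θ = 0 := by
      linear_combination Real.sin θ * e1 - ρ θ * u θ * hd
    have hT : ρ θ * ((u' θ + w θ) * (soundSq ε E0 u w θ - u θ ^ 2) * Real.sin θ
        + (u θ * Real.cos θ + w θ * Real.sin θ) * soundSq ε E0 u w θ) = 0 := by
      linear_combination soundSq ε E0 u w θ * e1'' - Real.sin θ * u θ * h2 θ hθ
    rcases mul_eq_zero.mp hT with h | h
    · exact absurd h (hρpos θ hθ).ne'
    · exact h
  -- u² > 0
  have husq : ∀ θ ∈ S, 0 < u θ ^ 2 := fun θ hθ =>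
    lt_of_le_of_ne (sq_nonneg _) (Ne.symm (pow_ne_zero 2 (hune θ hθ)))
  -- c² > u² on S
  have hfβ : 0 < soundSq ε E0 u w β0 - u β0 ^ 2 := by
    have key : soundSq ε E0 u w β0 - u β0 ^ 2
        = Real.sin β0 ^ 2 * (2 + ε * M ^ 2) * (M ^ 2 - 1) / ((ε + 2) * (M ^ 2) ^ 2) := by
      have hE'v : E' = Real.sin β0 ^ 2 / (ε * M ^ 2) := by
        rw [hM2]; field_simp
      simp only [soundSq]
      rw [huβ, hwβ, hE0, Real.cos_sq', hE'v]
      have h1 : (ε + 2) * M ^ 2 ≠ 0 := by positivity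
      field_simp
      ring
    rw [key]
    have h2' : 0 < M ^ 2 - 1 := by linarith
    positivity
  have hccu : ∀ θ ∈ S, u θ ^ 2 < soundSq ε E0 u w θ := by
    have hcont : ContinuousOn (fun t => soundSq ε E0 u w t - u t ^ 2) S :=
      hccc.sub (huc.pow 2)
    have hne : ∀ x ∈ S, soundSq ε E0 u w x - u x ^ 2 ≠ 0 := by
      intro x hx h0
      have hcc : soundSq ε E0 u w x = u x ^ 2 := by linarith
      have : Mach ε E0 u w x = 1 := by
        unfold Mach
        rw [hcc, Real.sqrt_sq_eq_abs]
        exact div_self (abs_ne_zero.mpr (hune x hx))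
      exact hMn x hx this
    have := aux_pos_Ioc hcont hfβ hne
    intro θ hθ
    linarith [this θ hθ]
  have hccpos : ∀ θ ∈ S, 0 < soundSq ε E0 u w θ := fun θ hθ =>
    lt_trans (husq θ hθ) (hccu θ hθ)
  have hsqpos : ∀ θ ∈ S, 0 < Real.sqrt (soundSq ε E0 u w θ) := fun θ hθ =>
    Real.sqrt_pos.mpr (hccpos θ hθ)
  -- u < 0 on S
  have huβneg : u β0 < 0 := by
    rw [huβ]
    have hq : 0 < (2 + ε * M ^ 2) / ((ε + 2) * M ^ 2) := by positivity
    nlinarith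
  have huneg : ∀ θ ∈ S, u θ < 0 := by
    have := aux_pos_Ioc (f := fun t => -u t) huc.neg (by simpa using huβneg)
      (fun x hx h => hune x hx (neg_eq_zero.mp h))
    intro θ hθ
    have h : 0 < -u θ := this θ hθ
    linarith
  -- key sign lemma: g > 0 → u' + w < 0
  have hkey : ∀ θ ∈ S, 0 < u θ * Real.cos θ + w θ * Real.sin θ → u' θ + w θ < 0 := by
    intro θ hθ hg0
    have h4θ := h4 θ hθ
    have h1 : 0 < soundSq ε E0 u w θ - u θ ^ 2 := sub_pos.mpr (hccu θ hθ)
    have hsp := hsθ θ hθ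
    have hgc := mul_pos hg0 (hccpos θ hθ)
    by_contra hle
    push_neg at hle
    nlinarith [mul_nonneg (mul_nonneg hle h1.le) hsp.le]
  -- g > 0 on S
  have hgβ : 0 < u β0 * Real.cos β0 + w β0 * Real.sin β0 := by
    rw [huβ, hwβ]
    have hq : (2 + ε * M ^ 2) / ((ε + 2) * M ^ 2) < 1 := by
      rw [div_lt_one (by positivity)]
      nlinarith
    nlinarith [mul_pos (sub_pos.mpr hq) (mul_pos hsβ hcβ)]
  have hgc : ContinuousOn (fun t => u t * Real.cos t + w t * Real.sin t) S :=
    (huc.mul Real.continuous_cos.continuousOn).add (hwc.mul Real.continuous_sin.continuousOn)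
  have hgder : ∀ x ∈ S, HasDerivWithinAt (fun t => u t * Real.cos t + w t * Real.sin t)
      ((u' x + w x) * Real.cos x) S x := by
    intro x hxS
    have d1 := (hu x hxS).mul (Real.hasDerivAt_cos x).hasDerivWithinAt
    have d2 := (hw x hxS).mul (Real.hasDerivAt_sin x).hasDerivWithinAt
    have := d1.add d2
    refine this.congr_deriv ?_
    rw [hODE2 x hxS]
    ring
  have hgpos : ∀ θ ∈ S, 0 < u θ * Real.cos θ + w θ * Real.sin θ := by
    by_contra hcon
    push_neg at hcon
    obtain ⟨θ1, hθ1, hle⟩ := hcon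
    set gf := fun t => u t * Real.cos t + w t * Real.sin t with hgf
    have hgβ' : 0 < gf β0 := hgβ
    have hθ1β : θ1 < β0 := lt_of_le_of_ne hθ1.2 (by rintro rfl; linarith)
    have hIccsub : Icc θ1 β0 ⊆ S := fun y hy => ⟨lt_of_lt_of_le hθ1.1 hy.1, hy.2⟩
    have hgcI : ContinuousOn gf (Icc θ1 β0) := hgc.mono hIccsub
    set Z := Icc θ1 β0 ∩ gf ⁻¹' {0} with hZ
    have hZclosed : IsClosed Z :=
      hgcI.preimage_isClosed_of_isClosed isClosed_Icc isClosed_singleton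
    have hZcomp : IsCompact Z :=
      isCompact_Icc.of_isClosed_subset hZclosed inter_subset_left
    have hZne : Z.Nonempty := by
      obtain ⟨x, hx, hgx⟩ := intermediate_value_Icc hθ1.2 hgcI ⟨hle, hgβ.le⟩
      exact ⟨x, hx, by simpa using hgx⟩
    have hθ2mem : sSup Z ∈ Z := hZcomp.sSup_mem hZne
    set θ2 := sSup Z with hθ2
    have hgθ2 : gf θ2 = 0 := hθ2mem.2
    have hθ2Icc : θ2 ∈ Icc θ1 β0 := hθ2mem.1
    have hθ2S : θ2 ∈ S := hIccsub hθ2Icc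
    have hθ2β : θ2 < β0 := lt_of_le_of_ne hθ2Icc.2 (by rintro h; rw [h] at hgθ2; linarith [hgβ'])
    have hbdd : BddAbove Z := hZcomp.bddAbove
    have hposIoc : ∀ t ∈ Ioc θ2 β0, 0 < gf t := by
      intro t ht
      have htI : t ∈ Icc θ1 β0 := ⟨le_trans hθ2Icc.1 ht.1.le, ht.2⟩
      rcases lt_trichotomy (gf t) 0 with hlt | heq | hgt
      · exfalso
        have hsub2 : Icc t β0 ⊆ Icc θ1 β0 := fun y hy => ⟨le_trans htI.1 hy.1, hy.2⟩
        obtain ⟨x, hx, hgx⟩ := intermediate_value_Icc ht.2 (hgcI.mono hsub2) ⟨hlt.le, hgβ.le⟩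
        have hxZ : x ∈ Z := ⟨hsub2 hx, by simpa using hgx⟩
        have := le_csSup hbdd hxZ
        have := hx.1
        have := ht.1
        linarith
      · exfalso
        have htZ : t ∈ Z := ⟨htI, by simpa using heq⟩
        have := le_csSup hbdd htZ
        linarith [ht.1]
      · exact hgt
    have hIcc2sub : Icc θ2 β0 ⊆ S := fun y hy => ⟨lt_of_lt_of_le hθ2S.1 hy.1, hy.2⟩
    have hanti : StrictAntiOn gf (Icc θ2 β0) := by
      apply strictAntiOn_of_hasDerivWithinAt_neg (f' := fun t => (u' t + w t) * Real.cos t)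
        (convex_Icc _ _) (hgc.mono hIcc2sub)
      · intro x hx
        rw [interior_Icc] at hx
        have hxS : x ∈ S := hIcc2sub (Ioo_subset_Icc_self hx)
        rw [interior_Icc]
        exact (hgder x hxS).mono (fun y hy => hIcc2sub (Ioo_subset_Icc_self hy))
      · intro x hx
        rw [interior_Icc] at hx
        have hxS : x ∈ S := hIcc2sub (Ioo_subset_Icc_self hx)
        have hgx : 0 < gf x := hposIoc x ⟨hx.1, hx.2.le⟩
        exact mul_neg_of_neg_of_pos (hkey x hxS hgx) (hcθ x hxS)
    have : gf β0 < gf θ2 :=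
      hanti (left_mem_Icc.mpr hθ2β.le) (right_mem_Icc.mpr hθ2β.le) hθ2β
    rw [hgθ2] at this
    linarith [hgβ']
  -- main sign facts
  have hu'w : ∀ θ ∈ S, u' θ + w θ < 0 := fun θ hθ => hkey θ hθ (hgpos θ hθ)
  have hwanti : StrictAntiOn w S := by
    apply strictAntiOn_of_hasDerivWithinAt_neg (f' := w') (convex_Ioc _ _) hwc
    · intro x hx
      rw [interior_Ioc] at hx ⊢
      exact (hw x (Ioo_subset_Ioc_self hx)).mono Ioo_subset_Ioc_self
    · intro x hx
      rw [interior_Ioc] at hx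
      have hxS : x ∈ S := Ioo_subset_Ioc_self hx
      rw [hODE2 x hxS]
      exact huneg x hxS
  have hwpos : ∀ θ ∈ S, 0 < w θ := by
    intro θ hθ
    rcases hθ.2.lt_or_eq with h | h
    · have := hwanti hθ hbS h
      rw [hwβ] at this
      linarith
    · rw [h, hwβ]; exact hcβ
  have hu'neg : ∀ θ ∈ S, u' θ < 0 := fun θ hθ => by
    have := hu'w θ hθ; have := hwpos θ hθ; linarith
  have hw'neg : ∀ θ ∈ S, w' θ < 0 := fun θ hθ => by
    rw [hODE2 θ hθ]; exact huneg θ hθ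
  -- derivative of c²
  have hccder : ∀ θ ∈ S, HasDerivWithinAt (soundSq ε E0 u w)
      (-(ε * u θ * (u' θ + w θ))) S θ := by
    intro θ hθ
    have hbuild := ((((hu θ hθ).pow 2).add ((hw θ hθ).pow 2)).div_const 2).const_sub E0
      |>.const_mul ε
    rw [hccfun]
    refine hbuild.congr_deriv ?_
    rw [hODE2 θ hθ]
    ring
  have hcc'neg : ∀ θ ∈ S, -(ε * u θ * (u' θ + w θ)) < 0 := by
    intro θ hθ
    have h1 : 0 < u θ * (u' θ + w θ) := mul_pos_of_neg_of_neg (huneg θ hθ) (hu'w θ hθ)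
    nlinarith
  -- derivative of c
  have hcder : ∀ θ ∈ S, HasDerivWithinAt (fun t => Real.sqrt (soundSq ε E0 u w t))
      (1 / (2 * Real.sqrt (soundSq ε E0 u w θ)) * (-(ε * u θ * (u' θ + w θ)))) S θ := by
    intro θ hθ
    exact (Real.hasDerivAt_sqrt (hccpos θ hθ).ne').comp_hasDerivWithinAt θ (hccder θ hθ)
  have hc'neg : ∀ θ ∈ S,
      1 / (2 * Real.sqrt (soundSq ε E0 u w θ)) * (-(ε * u θ * (u' θ + w θ))) < 0 := by
    intro θ hθ
    have := hsqpos θ hθ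
    exact mul_neg_of_pos_of_neg (by positivity) (hcc'neg θ hθ)
  -- Mach function
  have hMeq : EqOn (Mach ε E0 u w) (fun t => -u t / Real.sqrt (soundSq ε E0 u w t)) S := by
    intro t ht
    unfold Mach
    rw [abs_of_neg (huneg t ht)]
  have hmder : ∀ θ ∈ S, HasDerivWithinAt (fun t => -u t / Real.sqrt (soundSq ε E0 u w t))
      ((-u' θ * Real.sqrt (soundSq ε E0 u w θ) - -u θ *
        (1 / (2 * Real.sqrt (soundSq ε E0 u w θ)) * (-(ε * u θ * (u' θ + w θ)))))
        / Real.sqrt (soundSq ε E0 u w θ) ^ 2) S θ := by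
    intro θ hθ
    exact ((hu θ hθ).neg).div (hcder θ hθ) (hsqpos θ hθ).ne'
  have hm'pos : ∀ θ ∈ S, 0 < (-u' θ * Real.sqrt (soundSq ε E0 u w θ) - -u θ *
        (1 / (2 * Real.sqrt (soundSq ε E0 u w θ)) * (-(ε * u θ * (u' θ + w θ)))))
        / Real.sqrt (soundSq ε E0 u w θ) ^ 2 := by
    intro θ hθ
    have hsq := hsqpos θ hθ
    apply div_pos _ (by positivity)
    have t1 : 0 < -u' θ * Real.sqrt (soundSq ε E0 u w θ) :=
      mul_pos (neg_pos.mpr (hu'neg θ hθ)) hsq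
    have t2 : 0 < u θ * (1 / (2 * Real.sqrt (soundSq ε E0 u w θ))
        * (-(ε * u θ * (u' θ + w θ)))) :=
      mul_pos_of_neg_of_neg (huneg θ hθ) (hc'neg θ hθ)
    nlinarith
  have hUD : UniqueDiffOn ℝ S := uniqueDiffOn_Ioc _ _
  have hsqc : ContinuousOn (fun t => Real.sqrt (soundSq ε E0 u w t)) S :=
    Real.continuous_sqrt.comp_continuousOn hccc
  have hmc : ContinuousOn (fun t => -u t / Real.sqrt (soundSq ε E0 u w t)) S :=
    huc.neg.div hsqc (fun t ht => (hsqpos t ht).ne')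
  have hmmono : StrictMonoOn (fun t => -u t / Real.sqrt (soundSq ε E0 u w t)) S := by
    apply strictMonoOn_of_hasDerivWithinAt_pos
      (f' := fun θ => (-u' θ * Real.sqrt (soundSq ε E0 u w θ) - -u θ *
        (1 / (2 * Real.sqrt (soundSq ε E0 u w θ)) * (-(ε * u θ * (u' θ + w θ)))))
        / Real.sqrt (soundSq ε E0 u w θ) ^ 2)
      (convex_Ioc _ _) hmc
    · intro x hx
      rw [interior_Ioc] at hx ⊢
      exact (hmder x (Ioo_subset_Ioc_self hx)).mono Ioo_subset_Ioc_self
    · intro x hx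
      rw [interior_Ioc] at hx
      exact hm'pos x (Ioo_subset_Ioc_self hx)
  refine ⟨huneg, hwpos, hw'neg, ?_, hu'neg, ?_, ?_, hwanti, ?_, ?_, ?_⟩
  · intro θ hθ
    rw [(hcder θ hθ).derivWithin (hUD θ hθ)]
    exact hc'neg θ hθ
  · intro θ hθ
    rw [derivWithin_congr hMeq (hMeq hθ), (hmder θ hθ).derivWithin (hUD θ hθ)]
    exact hm'pos θ hθ
  · intro θ hθ
    constructor
    · exact div_pos (abs_pos.mpr (hune θ hθ)) (hsqpos θ hθ)
    · rw [Mach, div_lt_one (hsqpos θ hθ)]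
      exact Real.lt_sqrt_of_sq_lt (by rw [sq_abs]; exact hccu θ hθ)
  · apply strictAntiOn_of_hasDerivWithinAt_neg
      (f' := fun θ => 1 / (2 * Real.sqrt (soundSq ε E0 u w θ)) * (-(ε * u θ * (u' θ + w θ))))
      (convex_Ioc _ _) hsqc
    · intro x hx
      rw [interior_Ioc] at hx ⊢
      exact (hcder x (Ioo_subset_Ioc_self hx)).mono Ioo_subset_Ioc_self
    · intro x hx
      rw [interior_Ioc] at hx
      exact hc'neg x (Ioo_subset_Ioc_self hx)
  · apply strictAntiOn_of_hasDerivWithinAt_neg (f' := u') (convex_Ioc _ _) huc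
    · intro x hx
      rw [interior_Ioc] at hx ⊢
      exact (hu x (Ioo_subset_Ioc_self hx)).mono Ioo_subset_Ioc_self
    · intro x hx
      rw [interior_Ioc] at hx
      exact hu'neg x (Ioo_subset_Ioc_self hx)
  · intro x hx y hy hxy
    rw [hMeq hx, hMeq hy]
    exact hmmono hx hy hxy
end

section
/- Let θ0 ∈ (0, π/2) and ε0 > 0. For each ε ∈ (0, ε0) let β_ε ∈ (θ0, π/2) with β_ε → θ0 as ε → 0+, let δ_ε ≥ 0 with δ_ε → 0 as ε → 0+, and let ρ_ε : [θ0, β_ε] → [0, ∞) and w_ε : [θ0, β_ε] → ℝ be integrable functions with cos β_ε ≤ w_ε(θ) ≤ cos β_ε + δ_ε for all θ ∈ [θ0, β_ε] and ∫_{θ0}^{β_ε} ρ_ε(θ)w_ε(θ)sin θ dθ = (1/2)·sin²β_ε. Then for every continuous function ψ : [0, π] → ℝ, lim_{ε→0+} ∫_{θ0}^{β_ε} ψ(θ)·ρ_ε(θ)·sin θ dθ = (1/2)·tan θ0·sin θ0·ψ(θ0). -/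
open Real Set Filter Topology MeasureTheory intervalIntegral

/-- concentration of mass in the hypersonic limit. If on shrinking
layers [θ0, β_ε] the radial velocity w_ε is trapped in [cos β_ε, cos β_ε + δ_ε] with
δ_ε → 0, the density ρ_ε is nonnegative, and the radial mass flux satisfies
∫ ρ_ε w_ε sin θ dθ = (1/2)sin²β_ε, then ∫ ψ ρ_ε sin θ dθ → (1/2)tan θ0 sin θ0·ψ(θ0)
for every continuous ψ : [0, π] → ℝ. -/
theorem mass_concentration (θ0 ε0 : ℝ) (hθ0 : θ0 ∈ Ioo 0 (π / 2)) (hε0 : 0 < ε0)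
    (β δ : ℝ → ℝ) (r wv : ℝ → ℝ → ℝ)
    (hβ : ∀ ε ∈ Ioo (0 : ℝ) ε0, β ε ∈ Ioo θ0 (π / 2))
    (hβlim : Tendsto β (nhdsWithin 0 (Ioi 0)) (nhds θ0))
    (hδnn : ∀ ε ∈ Ioo (0 : ℝ) ε0, 0 ≤ δ ε)
    (hδlim : Tendsto δ (nhdsWithin 0 (Ioi 0)) (nhds 0))
    (hrnn : ∀ ε ∈ Ioo (0 : ℝ) ε0, ∀ θ ∈ Icc θ0 (β ε), 0 ≤ r ε θ)
    (hwtrap : ∀ ε ∈ Ioo (0 : ℝ) ε0, ∀ θ ∈ Icc θ0 (β ε),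
      Real.cos (β ε) ≤ wv ε θ ∧ wv ε θ ≤ Real.cos (β ε) + δ ε)
    (hrint : ∀ ε ∈ Ioo (0 : ℝ) ε0, IntervalIntegrable (r ε) volume θ0 (β ε))
    (hrwint : ∀ ε ∈ Ioo (0 : ℝ) ε0,
      IntervalIntegrable (fun θ => r ε θ * wv ε θ * Real.sin θ) volume θ0 (β ε))
    (hmass : ∀ ε ∈ Ioo (0 : ℝ) ε0,
      ∫ θ in θ0..(β ε), r ε θ * wv ε θ * Real.sin θ = (1 / 2) * Real.sin (β ε) ^ 2) :
    ∀ ψ : ℝ → ℝ, ContinuousOn ψ (Icc 0 π) →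
      Tendsto (fun ε => ∫ θ in θ0..(β ε), ψ θ * r ε θ * Real.sin θ)
        (nhdsWithin 0 (Ioi 0)) (nhds ((1 / 2) * Real.tan θ0 * Real.sin θ0 * ψ θ0)) := by
  intro ψ hψ
  obtain ⟨hθ0pos, hθ0lt⟩ := hθ0
  have hπ := Real.pi_pos
  have hc0 : 0 < Real.cos θ0 := Real.cos_pos_of_mem_Ioo ⟨by linarith, hθ0lt⟩
  have hs0 : 0 < Real.sin θ0 := Real.sin_pos_of_pos_of_lt_pi hθ0pos (by linarith)
  set L : ℝ := 1 / 2 * Real.sin θ0 ^ 2 / Real.cos θ0 with hLdef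
  have hLpos : 0 < L := by positivity
  have hS : Ioo (0:ℝ) ε0 ∈ 𝓝[>] (0:ℝ) := Ioo_mem_nhdsGT_of_mem ⟨le_refl 0, hε0⟩
  set M : ℝ → ℝ := fun ε => ∫ θ in θ0..(β ε), r ε θ * Real.sin θ with hMdef
  -- facts for each admissible ε
  have key : ∀ ε ∈ Ioo (0:ℝ) ε0,
      IntervalIntegrable (fun θ => r ε θ * Real.sin θ) volume θ0 (β ε) ∧
      0 ≤ M ε ∧
      Real.cos (β ε) * M ε ≤ 1 / 2 * Real.sin (β ε) ^ 2 ∧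
      1 / 2 * Real.sin (β ε) ^ 2 ≤ (Real.cos (β ε) + δ ε) * M ε := by
    intro ε hε
    obtain ⟨hβ1, hβ2⟩ := hβ ε hε
    have hab : θ0 ≤ β ε := le_of_lt hβ1
    have huIcc : uIcc θ0 (β ε) = Icc θ0 (β ε) := uIcc_of_le hab
    have hsinnn : ∀ θ ∈ Icc θ0 (β ε), 0 ≤ Real.sin θ := by
      intro θ hθ
      exact Real.sin_nonneg_of_nonneg_of_le_pi (by linarith [hθ.1]) (by linarith [hθ.2])
    have hint : IntervalIntegrable (fun θ => r ε θ * Real.sin θ) volume θ0 (β ε) :=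
      (hrint ε hε).mul_continuousOn Real.continuous_sin.continuousOn
    have hMnn : 0 ≤ M ε := by
      apply intervalIntegral.integral_nonneg hab
      intro θ hθ
      exact mul_nonneg (hrnn ε hε θ hθ) (hsinnn θ hθ)
    refine ⟨hint, hMnn, ?_, ?_⟩
    · rw [← hmass ε hε, ← intervalIntegral.integral_const_mul]
      apply intervalIntegral.integral_mono_on hab (hint.const_mul _) (hrwint ε hε)
      intro θ hθ
      have h1 := (hwtrap ε hε θ hθ).1
      have h2 := hrnn ε hε θ hθ
      have h3 := hsinnn θ hθ
      nlinarith [mul_le_mul_of_nonneg_left h1 h2]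
    · rw [← hmass ε hε, ← intervalIntegral.integral_const_mul]
      apply intervalIntegral.integral_mono_on hab (hrwint ε hε) (hint.const_mul _)
      intro θ hθ
      have h1 := (hwtrap ε hε θ hθ).2
      have h2 := hrnn ε hε θ hθ
      have h3 := hsinnn θ hθ
      nlinarith [mul_le_mul_of_nonneg_left h1 h2]
  -- squeeze for M
  have hcosβ : ∀ ε ∈ Ioo (0:ℝ) ε0, 0 < Real.cos (β ε) := by
    intro ε hε
    obtain ⟨hβ1, hβ2⟩ := hβ ε hε
    exact Real.cos_pos_of_mem_Ioo ⟨by linarith, hβ2⟩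
  have hsinβlim : Tendsto (fun ε => Real.sin (β ε)) (𝓝[>] 0) (𝓝 (Real.sin θ0)) :=
    (Real.continuous_sin.tendsto θ0).comp hβlim
  have hcosβlim : Tendsto (fun ε => Real.cos (β ε)) (𝓝[>] 0) (𝓝 (Real.cos θ0)) :=
    (Real.continuous_cos.tendsto θ0).comp hβlim
  have hlow : Tendsto (fun ε => 1 / 2 * Real.sin (β ε) ^ 2 / (Real.cos (β ε) + δ ε))
      (𝓝[>] 0) (𝓝 L) := by
    have hnum : Tendsto (fun ε => 1 / 2 * Real.sin (β ε) ^ 2) (𝓝[>] 0)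
        (𝓝 (1 / 2 * Real.sin θ0 ^ 2)) := tendsto_const_nhds.mul (hsinβlim.pow 2)
    have hden : Tendsto (fun ε => Real.cos (β ε) + δ ε) (𝓝[>] 0)
        (𝓝 (Real.cos θ0)) := by
      simpa using hcosβlim.add hδlim
    exact hnum.div hden (ne_of_gt hc0)
  have hup : Tendsto (fun ε => 1 / 2 * Real.sin (β ε) ^ 2 / Real.cos (β ε))
      (𝓝[>] 0) (𝓝 L) :=
    (tendsto_const_nhds.mul (hsinβlim.pow 2)).div hcosβlim (ne_of_gt hc0)
  have hMlim : Tendsto M (𝓝[>] 0) (𝓝 L) := by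
    apply tendsto_of_tendsto_of_tendsto_of_le_of_le' hlow hup
    · filter_upwards [hS] with ε hε
      have hc := hcosβ ε hε
      have hd := hδnn ε hε
      have hk := (key ε hε).2.2.2
      rw [div_le_iff₀ (by linarith)]
      linarith [hk, mul_comm (Real.cos (β ε) + δ ε) (M ε)]
    · filter_upwards [hS] with ε hε
      have hc := hcosβ ε hε
      have hk := (key ε hε).2.2.1
      rw [le_div_iff₀ hc]
      linarith [mul_comm (M ε) (Real.cos (β ε))]
  -- error term tends to 0
  have hE : Tendsto (fun ε => (∫ θ in θ0..(β ε), ψ θ * r ε θ * Real.sin θ) - ψ θ0 * M ε)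
      (𝓝[>] 0) (𝓝 0) := by
    rw [Metric.tendsto_nhds]
    intro η hη
    have hη' : 0 < η / (2 * (L + 1)) := by positivity
    have hθ0mem : θ0 ∈ Icc 0 π := ⟨le_of_lt hθ0pos, by linarith⟩
    have hψc : ContinuousWithinAt ψ (Icc 0 π) θ0 := hψ θ0 hθ0mem
    rw [Metric.continuousWithinAt_iff] at hψc
    obtain ⟨d, hd, hdprop⟩ := hψc (η / (2 * (L + 1))) hη'
    have hβsmall : ∀ᶠ ε in 𝓝[>] (0:ℝ), β ε < θ0 + d :=
      hβlim.eventually_lt_const (by linarith)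
    have hMsmall : ∀ᶠ ε in 𝓝[>] (0:ℝ), M ε < L + 1 :=
      hMlim.eventually_lt_const (by linarith)
    filter_upwards [hS, hβsmall, hMsmall] with ε hε hβd hM1
    obtain ⟨hβ1, hβ2⟩ := hβ ε hε
    have hab : θ0 ≤ β ε := le_of_lt hβ1
    have huIcc : uIcc θ0 (β ε) = Icc θ0 (β ε) := uIcc_of_le hab
    have hsub : Icc θ0 (β ε) ⊆ Icc 0 π :=
      Icc_subset_Icc (le_of_lt hθ0pos) (by linarith)
    obtain ⟨hint, hMnn, -, -⟩ := key ε hε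
    have hψint : IntervalIntegrable (fun θ => ψ θ * (r ε θ * Real.sin θ)) volume θ0 (β ε) :=
      hint.continuousOn_mul (by rw [huIcc]; exact hψ.mono hsub)
    have hψbd : ∀ θ ∈ Icc θ0 (β ε), |ψ θ - ψ θ0| ≤ η / (2 * (L + 1)) := by
      intro θ hθ
      refine le_of_lt (hdprop (hsub hθ) ?_)
      rw [Real.dist_eq, abs_of_nonneg (by linarith [hθ.1])]
      linarith [hθ.2]
    -- rewrite the difference as a single integral
    have heq : (∫ θ in θ0..(β ε), ψ θ * r ε θ * Real.sin θ) - ψ θ0 * M ε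
        = ∫ θ in θ0..(β ε), (ψ θ - ψ θ0) * (r ε θ * Real.sin θ) := by
      rw [hMdef]
      simp only
      rw [← intervalIntegral.integral_const_mul (ψ θ0) (fun θ => r ε θ * Real.sin θ),
        ← intervalIntegral.integral_sub (by simpa [mul_assoc] using hψint) (hint.const_mul _)]
      congr 1
      funext θ
      ring
    rw [Real.dist_eq, sub_zero, heq]
    have habs : |∫ θ in θ0..(β ε), (ψ θ - ψ θ0) * (r ε θ * Real.sin θ)|
        ≤ ∫ θ in θ0..(β ε), η / (2 * (L + 1)) * (r ε θ * Real.sin θ) := by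
      calc |∫ θ in θ0..(β ε), (ψ θ - ψ θ0) * (r ε θ * Real.sin θ)|
          ≤ ∫ θ in θ0..(β ε), |(ψ θ - ψ θ0) * (r ε θ * Real.sin θ)| :=
            intervalIntegral.abs_integral_le_integral_abs hab
        _ ≤ ∫ θ in θ0..(β ε), η / (2 * (L + 1)) * (r ε θ * Real.sin θ) := by
            apply intervalIntegral.integral_mono_on hab
            · exact (hint.continuousOn_mul (by
                rw [huIcc]
                exact (hψ.mono hsub).sub continuousOn_const)).abs
            · exact hint.const_mul _
            · intro θ hθ
              have hrs : 0 ≤ r ε θ * Real.sin θ :=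
                mul_nonneg (hrnn ε hε θ hθ)
                  (Real.sin_nonneg_of_nonneg_of_le_pi (by linarith [hθ.1]) (by linarith [hθ.2]))
              rw [abs_mul, abs_of_nonneg hrs]
              exact mul_le_mul_of_nonneg_right (hψbd θ hθ) hrs
    have : (∫ θ in θ0..(β ε), η / (2 * (L + 1)) * (r ε θ * Real.sin θ))
        = η / (2 * (L + 1)) * M ε := intervalIntegral.integral_const_mul _ _
    rw [this] at habs
    calc |∫ θ in θ0..(β ε), (ψ θ - ψ θ0) * (r ε θ * Real.sin θ)|
        ≤ η / (2 * (L + 1)) * M ε := habs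
      _ ≤ η / (2 * (L + 1)) * (L + 1) := by
          apply mul_le_mul_of_nonneg_left (le_of_lt hM1) (le_of_lt hη')
      _ = η / 2 := by field_simp
      _ < η := by linarith
  -- combine
  have hmain : Tendsto (fun ε => ψ θ0 * M ε) (𝓝[>] 0) (𝓝 (ψ θ0 * L)) :=
    tendsto_const_nhds.mul hMlim
  have := hE.add hmain
  simp only [zero_add] at this
  have heq2 : (fun ε => (∫ θ in θ0..(β ε), ψ θ * r ε θ * Real.sin θ) - ψ θ0 * M ε
      + ψ θ0 * M ε) = fun ε => ∫ θ in θ0..(β ε), ψ θ * r ε θ * Real.sin θ := by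
    funext ε; ring
  rw [heq2] at this
  have hval : ψ θ0 * L = 1 / 2 * Real.tan θ0 * Real.sin θ0 * ψ θ0 := by
    rw [hLdef, Real.tan_eq_sin_div_cos]
    field_simp
  rwa [hval] at this
end
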